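/- Let u : ℝ × ℝ³ → ℝ³ be smooth with vorticity ω = ∇×u satisfying ∂ω/∂t = ∇×(u×ω) (the barotropic vorticity equation), let ρ be a smooth positive density satisfying ∂ρ/∂t + ∇·(ρu) = 0, and let ψ be a smooth scalar advected with the flow: ∂ψ/∂t + u·∇ψ = 0. Then the potential vorticity ω·∇ψ/ρ is advected: (∂/∂t + u·∇)(ω·∇ψ/ρ) = 0 (Ertel's theorem). -/

import Mathlib

noncomputable section

open scoped BigOperators

abbrev V3 := Fin 3 → ℝ

/-- partial derivative of a scalar field in direction `i` -/
def pd (f : V3 → ℝ) (i : Fin 3) (x : V3) : ℝ := fderiv ℝ f x (Pi.single i 1)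

/-- gradient -/
def grad (f : V3 → ℝ) (x : V3) : V3 := fun i => pd f i x

/-- divergence -/
def div3 (F : V3 → V3) (x : V3) : ℝ := ∑ i, pd (fun y => F y i) i x

/-- curl -/
def curl3 (F : V3 → V3) (x : V3) : V3 :=
  ![pd (fun y => F y 2) 1 x - pd (fun y => F y 1) 2 x,
    pd (fun y => F y 0) 2 x - pd (fun y => F y 2) 0 x,
    pd (fun y => F y 1) 0 x - pd (fun y => F y 0) 1 x]

/-- cross product in ℝ³ -/
def cross (a b : V3) : V3 :=
  ![a 1 * b 2 - a 2 * b 1, a 2 * b 0 - a 0 * b 2, a 0 * b 1 - a 1 * b 0]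

/-- dot product in ℝ³ -/
def dot (a b : V3) : ℝ := ∑ i, a i * b i


def Dv (v : ℝ × V3) (f : ℝ × V3 → ℝ) : ℝ × V3 → ℝ := fun p => fderiv ℝ f p v
def eT : ℝ × V3 := (1, 0)
def eS (i : Fin 3) : ℝ × V3 := (0, Pi.single i 1)

lemma Dv_contDiff {f : ℝ × V3 → ℝ} (hf : ContDiff ℝ (⊤ : ℕ∞) f) (v : ℝ × V3) :
    ContDiff ℝ (⊤ : ℕ∞) (Dv v f) := by
  have h1 : ContDiff ℝ (⊤ : ℕ∞) (fderiv ℝ f) := hf.fderiv_right (by simp)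
  exact (ContinuousLinearMap.apply ℝ ℝ v).contDiff.comp h1

lemma Dv_diff {f : ℝ × V3 → ℝ} (hf : ContDiff ℝ (⊤ : ℕ∞) f) (v : ℝ × V3) :
    Differentiable ℝ (Dv v f) := (Dv_contDiff hf v).differentiable (by simp)

lemma deriv_slice' {f : ℝ × V3 → ℝ} (hf : Differentiable ℝ f) (t : ℝ) (x : V3) :
    deriv (fun s => f (s, x)) t = Dv eT f (t, x) := by
  have hg : HasDerivAt (fun s : ℝ => (s, x)) ((1 : ℝ), (0 : V3)) t :=
    (hasDerivAt_id t).prodMk (hasDerivAt_const t x)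
  exact ((hf (t, x)).hasFDerivAt.comp_hasDerivAt t hg).deriv

lemma pd_slice' {f : ℝ × V3 → ℝ} (hf : Differentiable ℝ f) (t : ℝ) (x : V3) (i : Fin 3) :
    pd (fun y => f (t, y)) i x = Dv (eS i) f (t, x) := by
  have hg : HasFDerivAt (fun y : V3 => (t, y)) (ContinuousLinearMap.inr ℝ ℝ V3) x :=
    (hasFDerivAt_const t x).prodMk (hasFDerivAt_id x)
  have h := ((hf (t, x)).hasFDerivAt.comp x hg)
  have h2 : fderiv ℝ (fun y => f (t, y)) x
      = (fderiv ℝ f (t, x)).comp (ContinuousLinearMap.inr ℝ ℝ V3) := h.fderiv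
  rw [pd, h2]; rfl

lemma Dv_swap {f : ℝ × V3 → ℝ} (hf : ContDiff ℝ (⊤ : ℕ∞) f) (v w : ℝ × V3) (p : ℝ × V3) :
    Dv v (Dv w f) p = Dv w (Dv v f) p := by
  have hsym : IsSymmSndFDerivAt ℝ f p :=
    (hf.contDiffAt).isSymmSndFDerivAt (by rw [minSmoothness_of_isRCLikeNormedField]; exact WithTop.coe_le_coe.mpr le_top)
  have key : ∀ a b : ℝ × V3, Dv a (Dv b f) p = fderiv ℝ (fderiv ℝ f) p a b := by
    intro a b
    have hdf : DifferentiableAt ℝ (fderiv ℝ f) p :=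
      ((hf.fderiv_right (m := (⊤ : ℕ∞)) (by simp)).differentiable (by simp)) p
    have h2 : fderiv ℝ (fun q => (fderiv ℝ f q) b) p =
        (fderiv ℝ f p).comp (fderiv ℝ (fun _ => b) p) + (fderiv ℝ (fderiv ℝ f) p).flip b :=
      fderiv_clm_apply hdf (differentiableAt_const b)
    show (fderiv ℝ (fun q => (fderiv ℝ f q) b) p) a = _
    rw [h2]; simp
  rw [key, key, hsym v w]

lemma Dv_add {f g : ℝ × V3 → ℝ} (hf : Differentiable ℝ f) (hg : Differentiable ℝ g)
    (v p : ℝ × V3) : Dv v (fun q => f q + g q) p = Dv v f p + Dv v g p := by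
  rw [Dv, fderiv_fun_add (hf p) (hg p)]; rfl

lemma Dv_sub {f g : ℝ × V3 → ℝ} (hf : Differentiable ℝ f) (hg : Differentiable ℝ g)
    (v p : ℝ × V3) : Dv v (fun q => f q - g q) p = Dv v f p - Dv v g p := by
  rw [Dv, fderiv_fun_sub (hf p) (hg p)]; rfl

lemma Dv_mul {f g : ℝ × V3 → ℝ} (hf : Differentiable ℝ f) (hg : Differentiable ℝ g)
    (v p : ℝ × V3) : Dv v (fun q => f q * g q) p = Dv v f p * g p + f p * Dv v g p := by
  rw [Dv, fderiv_fun_mul (hf p) (hg p)]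
  simp only [ContinuousLinearMap.add_apply, ContinuousLinearMap.smul_apply, smul_eq_mul, Dv]
  ring

lemma Dv_inv {g : ℝ × V3 → ℝ} (hg : Differentiable ℝ g)
    (hgp : ∀ q, g q ≠ 0) (v p : ℝ × V3) :
    Dv v (fun q => (g q)⁻¹) p = -(Dv v g p) / g p ^ 2 := by
  have h := (hasDerivAt_inv (hgp p)).comp_hasFDerivAt p (hg p).hasFDerivAt
  have h2 : fderiv ℝ (fun q => (g q)⁻¹) p = -(g p ^ 2)⁻¹ • fderiv ℝ g p := h.fderiv
  rw [Dv, h2]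
  simp only [ContinuousLinearMap.smul_apply, smul_eq_mul, Dv]
  field_simp

lemma Dv_div {f g : ℝ × V3 → ℝ} (hf : Differentiable ℝ f) (hg : Differentiable ℝ g)
    (hgp : ∀ q, g q ≠ 0) (v p : ℝ × V3) :
    Dv v (fun q => f q / g q) p = (Dv v f p * g p - f p * Dv v g p) / g p ^ 2 := by
  have hinv : Differentiable ℝ (fun q => (g q)⁻¹) := hg.inv hgp
  have h1 : Dv v (fun q => f q / g q) p = Dv v (fun q => f q * (g q)⁻¹) p := by
    simp only [div_eq_mul_inv]
  rw [h1, Dv_mul hf hinv v p, Dv_inv hg hgp v p]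
  have hg0 := hgp p
  field_simp
  ring

lemma Dv_const (c : ℝ) (v p : ℝ × V3) : Dv v (fun _ => c) p = 0 := by
  rw [Dv, fderiv_fun_const]; rfl

def W0 (u : ℝ × V3 → V3) : ℝ × V3 → ℝ :=
  fun q => Dv (eS 1) (fun r => u r 2) q - Dv (eS 2) (fun r => u r 1) q
def W1 (u : ℝ × V3 → V3) : ℝ × V3 → ℝ :=
  fun q => Dv (eS 2) (fun r => u r 0) q - Dv (eS 0) (fun r => u r 2) q
def W2 (u : ℝ × V3 → V3) : ℝ × V3 → ℝ :=
  fun q => Dv (eS 0) (fun r => u r 1) q - Dv (eS 1) (fun r => u r 0) q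
def C0 (u : ℝ × V3 → V3) : ℝ × V3 → ℝ := fun q => u q 1 * W2 u q - u q 2 * W1 u q
def C1 (u : ℝ × V3 → V3) : ℝ × V3 → ℝ := fun q => u q 2 * W0 u q - u q 0 * W2 u q
def C2 (u : ℝ × V3 → V3) : ℝ × V3 → ℝ := fun q => u q 0 * W1 u q - u q 1 * W0 u q
def Nf (u : ℝ × V3 → V3) (ψ : ℝ × V3 → ℝ) : ℝ × V3 → ℝ :=
  fun q => W0 u q * Dv (eS 0) ψ q + W1 u q * Dv (eS 1) ψ q + W2 u q * Dv (eS 2) ψ q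
def Qf (u : ℝ × V3 → V3) (ψ ρ : ℝ × V3 → ℝ) : ℝ × V3 → ℝ := fun q => Nf u ψ q / ρ q

theorem ertel_theorem (u : ℝ × V3 → V3) (ρ ψ : ℝ × V3 → ℝ)
    (hu : ContDiff ℝ (⊤ : ℕ∞) u) (hρ : ContDiff ℝ (⊤ : ℕ∞) ρ) (hψ : ContDiff ℝ (⊤ : ℕ∞) ψ)
    (hρpos : ∀ t x, 0 < ρ (t, x))
    (hvort : ∀ t x, (fun i => deriv (fun s => curl3 (fun y => u (s, y)) x i) t)
        = curl3 (fun y => cross (u (t, y)) (curl3 (fun z => u (t, z)) y)) x)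
    (hcont : ∀ t x, deriv (fun s => ρ (s, x)) t
        + div3 (fun y => ρ (t, y) • u (t, y)) x = 0)
    (hadv : ∀ t x, deriv (fun s => ψ (s, x)) t
        + dot (u (t, x)) (grad (fun y => ψ (t, y)) x) = 0) :
    ∀ t x,
      deriv (fun s => dot (curl3 (fun y => u (s, y)) x)
          (grad (fun y => ψ (s, y)) x) / ρ (s, x)) t
        + dot (u (t, x)) (grad (fun y =>
            dot (curl3 (fun z => u (t, z)) y)
              (grad (fun z => ψ (t, z)) y) / ρ (t, y)) x) = 0 := by
  intro t x
  have hρd : Differentiable ℝ ρ := hρ.differentiable (by simp)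
  have hψd : Differentiable ℝ ψ := hψ.differentiable (by simp)
  have hr0 : ∀ q : ℝ × V3, ρ q ≠ 0 := fun q => ne_of_gt (hρpos q.1 q.2)
  have hud0 : ContDiff ℝ (⊤ : ℕ∞) (fun r : ℝ × V3 => u r 0) := contDiff_pi.mp hu 0
  have hud1 : ContDiff ℝ (⊤ : ℕ∞) (fun r : ℝ × V3 => u r 1) := contDiff_pi.mp hu 1
  have hud2 : ContDiff ℝ (⊤ : ℕ∞) (fun r : ℝ × V3 => u r 2) := contDiff_pi.mp hu 2
  have hW0 : ContDiff ℝ (⊤ : ℕ∞) (W0 u) := (Dv_contDiff hud2 (eS 1)).sub (Dv_contDiff hud1 (eS 2))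
  have hW1 : ContDiff ℝ (⊤ : ℕ∞) (W1 u) := (Dv_contDiff hud0 (eS 2)).sub (Dv_contDiff hud2 (eS 0))
  have hW2 : ContDiff ℝ (⊤ : ℕ∞) (W2 u) := (Dv_contDiff hud1 (eS 0)).sub (Dv_contDiff hud0 (eS 1))
  have hG0 : ContDiff ℝ (⊤ : ℕ∞) (Dv (eS 0) ψ) := Dv_contDiff hψ (eS 0)
  have hG1 : ContDiff ℝ (⊤ : ℕ∞) (Dv (eS 1) ψ) := Dv_contDiff hψ (eS 1)
  have hG2 : ContDiff ℝ (⊤ : ℕ∞) (Dv (eS 2) ψ) := Dv_contDiff hψ (eS 2)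
  have hN : ContDiff ℝ (⊤ : ℕ∞) (Nf u ψ) := ((hW0.mul hG0).add (hW1.mul hG1)).add (hW2.mul hG2)
  have hQ : ContDiff ℝ (⊤ : ℕ∞) (Qf u ψ ρ) := hN.div hρ hr0
  have hC0 : ContDiff ℝ (⊤ : ℕ∞) (C0 u) := (hud1.mul hW2).sub (hud2.mul hW1)
  have hC1 : ContDiff ℝ (⊤ : ℕ∞) (C1 u) := (hud2.mul hW0).sub (hud0.mul hW2)
  have hC2 : ContDiff ℝ (⊤ : ℕ∞) (C2 u) := (hud0.mul hW1).sub (hud1.mul hW0)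
  have hcurl0 : ∀ (s : ℝ) (y : V3), curl3 (fun z => u (s, z)) y 0 = W0 u (s, y) := by
    intro s y
    show pd (fun z => u (s, z) 2) 1 y - pd (fun z => u (s, z) 1) 2 y
        = Dv (eS 1) (fun r => u r 2) (s, y) - Dv (eS 2) (fun r => u r 1) (s, y)
    exact congrArg₂ (· - ·)
      (pd_slice' (f := fun r => u r 2) (hud2.differentiable (by simp)) s y 1)
      (pd_slice' (f := fun r => u r 1) (hud1.differentiable (by simp)) s y 2)
  have hcurl1 : ∀ (s : ℝ) (y : V3), curl3 (fun z => u (s, z)) y 1 = W1 u (s, y) := by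
    intro s y
    show pd (fun z => u (s, z) 0) 2 y - pd (fun z => u (s, z) 2) 0 y
        = Dv (eS 2) (fun r => u r 0) (s, y) - Dv (eS 0) (fun r => u r 2) (s, y)
    exact congrArg₂ (· - ·)
      (pd_slice' (f := fun r => u r 0) (hud0.differentiable (by simp)) s y 2)
      (pd_slice' (f := fun r => u r 2) (hud2.differentiable (by simp)) s y 0)
  have hcurl2 : ∀ (s : ℝ) (y : V3), curl3 (fun z => u (s, z)) y 2 = W2 u (s, y) := by
    intro s y
    show pd (fun z => u (s, z) 1) 0 y - pd (fun z => u (s, z) 0) 1 y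
        = Dv (eS 0) (fun r => u r 1) (s, y) - Dv (eS 1) (fun r => u r 0) (s, y)
    exact congrArg₂ (· - ·)
      (pd_slice' (f := fun r => u r 1) (hud1.differentiable (by simp)) s y 0)
      (pd_slice' (f := fun r => u r 0) (hud0.differentiable (by simp)) s y 1)
  have hgrad : ∀ (s : ℝ) (y : V3) (i : Fin 3), grad (fun z => ψ (s, z)) y i = Dv (eS i) ψ (s, y) :=
    fun s y i => pd_slice' (f := ψ) hψd s y i
  have hQb : ∀ (s : ℝ) (y : V3),
      dot (curl3 (fun z => u (s, z)) y) (grad (fun z => ψ (s, z)) y) / ρ (s, y) = Qf u ψ ρ (s, y) := by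
    intro s y
    have hd : dot (curl3 (fun z => u (s, z)) y) (grad (fun z => ψ (s, z)) y) = Nf u ψ (s, y) := by
      simp only [dot, Fin.sum_univ_three]
      rw [hcurl0 s y, hcurl1 s y, hcurl2 s y, hgrad s y 0, hgrad s y 1, hgrad s y 2]
      rfl
    rw [hd]; rfl
  have e1 : (fun s => dot (curl3 (fun y => u (s, y)) x) (grad (fun y => ψ (s, y)) x) / ρ (s, x))
      = (fun s => Qf u ψ ρ (s, x)) := funext fun s => hQb s x
  have e2 : (fun y => dot (curl3 (fun z => u (t, z)) y) (grad (fun z => ψ (t, z)) y) / ρ (t, y))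
      = (fun y => Qf u ψ ρ (t, y)) := funext fun y => hQb t y
  rw [e1, e2, deriv_slice' (hQ.differentiable (by simp)) t x]
  simp only [dot, grad, Fin.sum_univ_three]
  rw [pd_slice' (f := Qf u ψ ρ) (hQ.differentiable (by simp)) t x 0,
      pd_slice' (f := Qf u ψ ρ) (hQ.differentiable (by simp)) t x 1,
      pd_slice' (f := Qf u ψ ρ) (hQ.differentiable (by simp)) t x 2]
  have hDQ : ∀ v, Dv v (Qf u ψ ρ) (t, x)
      = (Dv v (Nf u ψ) (t, x) * ρ (t, x) - Nf u ψ (t, x) * Dv v ρ (t, x)) / ρ (t, x) ^ 2 :=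
    fun v => Dv_div (f := Nf u ψ) (g := ρ) (hN.differentiable (by simp)) hρd hr0 v (t, x)
  have hDN : ∀ v, Dv v (Nf u ψ) (t, x)
      = (Dv v (W0 u) (t, x) * Dv (eS 0) ψ (t, x) + W0 u (t, x) * Dv v (Dv (eS 0) ψ) (t, x))
        + (Dv v (W1 u) (t, x) * Dv (eS 1) ψ (t, x) + W1 u (t, x) * Dv v (Dv (eS 1) ψ) (t, x))
        + (Dv v (W2 u) (t, x) * Dv (eS 2) ψ (t, x) + W2 u (t, x) * Dv v (Dv (eS 2) ψ) (t, x)) := by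
    intro v
    have e := Dv_add (f := fun q => W0 u q * Dv (eS 0) ψ q + W1 u q * Dv (eS 1) ψ q)
      (g := fun q => W2 u q * Dv (eS 2) ψ q)
      (((hW0.mul hG0).add (hW1.mul hG1)).differentiable (by simp))
      ((hW2.mul hG2).differentiable (by simp)) v (t, x)
    rw [Dv_add (f := fun q => W0 u q * Dv (eS 0) ψ q) (g := fun q => W1 u q * Dv (eS 1) ψ q)
        ((hW0.mul hG0).differentiable (by simp)) ((hW1.mul hG1).differentiable (by simp)) v (t, x),
      Dv_mul (f := W0 u) (g := Dv (eS 0) ψ) (hW0.differentiable (by simp)) (hG0.differentiable (by simp)) v (t, x),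
      Dv_mul (f := W1 u) (g := Dv (eS 1) ψ) (hW1.differentiable (by simp)) (hG1.differentiable (by simp)) v (t, x),
      Dv_mul (f := W2 u) (g := Dv (eS 2) ψ) (hW2.differentiable (by simp)) (hG2.differentiable (by simp)) v (t, x)] at e
    exact e
  have hDW0 : ∀ v, Dv v (W0 u) (t, x)
      = Dv v (Dv (eS 1) (fun r => u r 2)) (t, x) - Dv v (Dv (eS 2) (fun r => u r 1)) (t, x) :=
    fun v => Dv_sub (Dv_diff hud2 (eS 1)) (Dv_diff hud1 (eS 2)) v (t, x)
  have hDW1 : ∀ v, Dv v (W1 u) (t, x)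
      = Dv v (Dv (eS 2) (fun r => u r 0)) (t, x) - Dv v (Dv (eS 0) (fun r => u r 2)) (t, x) :=
    fun v => Dv_sub (Dv_diff hud0 (eS 2)) (Dv_diff hud2 (eS 0)) v (t, x)
  have hDW2 : ∀ v, Dv v (W2 u) (t, x)
      = Dv v (Dv (eS 0) (fun r => u r 1)) (t, x) - Dv v (Dv (eS 1) (fun r => u r 0)) (t, x) :=
    fun v => Dv_sub (Dv_diff hud1 (eS 0)) (Dv_diff hud0 (eS 1)) v (t, x)
  have hDC0 : ∀ v, Dv v (C0 u) (t, x)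
      = (Dv v (fun r => u r 1) (t, x) * W2 u (t, x) + u (t, x) 1 * Dv v (W2 u) (t, x))
        - (Dv v (fun r => u r 2) (t, x) * W1 u (t, x) + u (t, x) 2 * Dv v (W1 u) (t, x)) := by
    intro v
    have e := Dv_sub (f := fun q => u q 1 * W2 u q) (g := fun q => u q 2 * W1 u q)
      ((hud1.mul hW2).differentiable (by simp)) ((hud2.mul hW1).differentiable (by simp)) v (t, x)
    rw [Dv_mul (f := fun r => u r 1) (g := W2 u) (hud1.differentiable (by simp))
        (hW2.differentiable (by simp)) v (t, x),
      Dv_mul (f := fun r => u r 2) (g := W1 u) (hud2.differentiable (by simp))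
        (hW1.differentiable (by simp)) v (t, x)] at e
    exact e
  have hDC1 : ∀ v, Dv v (C1 u) (t, x)
      = (Dv v (fun r => u r 2) (t, x) * W0 u (t, x) + u (t, x) 2 * Dv v (W0 u) (t, x))
        - (Dv v (fun r => u r 0) (t, x) * W2 u (t, x) + u (t, x) 0 * Dv v (W2 u) (t, x)) := by
    intro v
    have e := Dv_sub (f := fun q => u q 2 * W0 u q) (g := fun q => u q 0 * W2 u q)
      ((hud2.mul hW0).differentiable (by simp)) ((hud0.mul hW2).differentiable (by simp)) v (t, x)
    rw [Dv_mul (f := fun r => u r 2) (g := W0 u) (hud2.differentiable (by simp))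
        (hW0.differentiable (by simp)) v (t, x),
      Dv_mul (f := fun r => u r 0) (g := W2 u) (hud0.differentiable (by simp))
        (hW2.differentiable (by simp)) v (t, x)] at e
    exact e
  have hDC2 : ∀ v, Dv v (C2 u) (t, x)
      = (Dv v (fun r => u r 0) (t, x) * W1 u (t, x) + u (t, x) 0 * Dv v (W1 u) (t, x))
        - (Dv v (fun r => u r 1) (t, x) * W0 u (t, x) + u (t, x) 1 * Dv v (W0 u) (t, x)) := by
    intro v
    have e := Dv_sub (f := fun q => u q 0 * W1 u q) (g := fun q => u q 1 * W0 u q)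
      ((hud0.mul hW1).differentiable (by simp)) ((hud1.mul hW0).differentiable (by simp)) v (t, x)
    rw [Dv_mul (f := fun r => u r 0) (g := W1 u) (hud0.differentiable (by simp))
        (hW1.differentiable (by simp)) v (t, x),
      Dv_mul (f := fun r => u r 1) (g := W0 u) (hud1.differentiable (by simp))
        (hW0.differentiable (by simp)) v (t, x)] at e
    exact e
  have hW0v : W0 u (t, x)
      = Dv (eS 1) (fun r => u r 2) (t, x) - Dv (eS 2) (fun r => u r 1) (t, x) := rfl
  have hW1v : W1 u (t, x)
      = Dv (eS 2) (fun r => u r 0) (t, x) - Dv (eS 0) (fun r => u r 2) (t, x) := rfl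
  have hW2v : W2 u (t, x)
      = Dv (eS 0) (fun r => u r 1) (t, x) - Dv (eS 1) (fun r => u r 0) (t, x) := rfl
  have hNv : Nf u ψ (t, x)
      = W0 u (t, x) * Dv (eS 0) ψ (t, x) + W1 u (t, x) * Dv (eS 1) ψ (t, x)
        + W2 u (t, x) * Dv (eS 2) ψ (t, x) := rfl
  have ecl0 : (fun y => cross (u (t, y)) (curl3 (fun z => u (t, z)) y) 0) = (fun y => C0 u (t, y)) := by
    funext y
    show u (t, y) 1 * curl3 (fun z => u (t, z)) y 2 - u (t, y) 2 * curl3 (fun z => u (t, z)) y 1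
        = C0 u (t, y)
    rw [hcurl2 t y, hcurl1 t y]
    rfl
  have ecl1 : (fun y => cross (u (t, y)) (curl3 (fun z => u (t, z)) y) 1) = (fun y => C1 u (t, y)) := by
    funext y
    show u (t, y) 2 * curl3 (fun z => u (t, z)) y 0 - u (t, y) 0 * curl3 (fun z => u (t, z)) y 2
        = C1 u (t, y)
    rw [hcurl0 t y, hcurl2 t y]
    rfl
  have ecl2 : (fun y => cross (u (t, y)) (curl3 (fun z => u (t, z)) y) 2) = (fun y => C2 u (t, y)) := by
    funext y
    show u (t, y) 0 * curl3 (fun z => u (t, z)) y 1 - u (t, y) 1 * curl3 (fun z => u (t, z)) y 0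
        = C2 u (t, y)
    rw [hcurl1 t y, hcurl0 t y]
    rfl
  have HV0 := by
    have h : deriv (fun s => curl3 (fun y => u (s, y)) x 0) t
        = curl3 (fun y => cross (u (t, y)) (curl3 (fun z => u (t, z)) y)) x 0 := congrFun (hvort t x) 0
    have e0 : (fun s => curl3 (fun y => u (s, y)) x 0) = (fun s => W0 u (s, x)) :=
      funext fun s => hcurl0 s x
    rw [e0, deriv_slice' (hW0.differentiable (by simp)) t x] at h
    have ec : curl3 (fun y => cross (u (t, y)) (curl3 (fun z => u (t, z)) y)) x 0
        = Dv (eS 1) (C2 u) (t, x) - Dv (eS 2) (C1 u) (t, x) := by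
      show pd (fun y => cross (u (t, y)) (curl3 (fun z => u (t, z)) y) 2) 1 x
          - pd (fun y => cross (u (t, y)) (curl3 (fun z => u (t, z)) y) 1) 2 x = _
      rw [ecl2, ecl1, pd_slice' (f := C2 u) (hC2.differentiable (by simp)) t x 1,
        pd_slice' (f := C1 u) (hC1.differentiable (by simp)) t x 2]
    rw [ec, hDC2 (eS 1), hDC1 (eS 2), hDW1 (eS 1), hDW0 (eS 1), hDW0 (eS 2), hDW2 (eS 2), hDW0 eT,
      hW0v, hW1v, hW2v] at h
    exact h
  have HV1 := by
    have h : deriv (fun s => curl3 (fun y => u (s, y)) x 1) t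
        = curl3 (fun y => cross (u (t, y)) (curl3 (fun z => u (t, z)) y)) x 1 := congrFun (hvort t x) 1
    have e0 : (fun s => curl3 (fun y => u (s, y)) x 1) = (fun s => W1 u (s, x)) :=
      funext fun s => hcurl1 s x
    rw [e0, deriv_slice' (hW1.differentiable (by simp)) t x] at h
    have ec : curl3 (fun y => cross (u (t, y)) (curl3 (fun z => u (t, z)) y)) x 1
        = Dv (eS 2) (C0 u) (t, x) - Dv (eS 0) (C2 u) (t, x) := by
      show pd (fun y => cross (u (t, y)) (curl3 (fun z => u (t, z)) y) 0) 2 x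
          - pd (fun y => cross (u (t, y)) (curl3 (fun z => u (t, z)) y) 2) 0 x = _
      rw [ecl0, ecl2, pd_slice' (f := C0 u) (hC0.differentiable (by simp)) t x 2,
        pd_slice' (f := C2 u) (hC2.differentiable (by simp)) t x 0]
    rw [ec, hDC0 (eS 2), hDC2 (eS 0), hDW2 (eS 2), hDW1 (eS 2), hDW1 (eS 0), hDW0 (eS 0), hDW1 eT,
      hW0v, hW1v, hW2v] at h
    exact h
  have HV2 := by
    have h : deriv (fun s => curl3 (fun y => u (s, y)) x 2) t
        = curl3 (fun y => cross (u (t, y)) (curl3 (fun z => u (t, z)) y)) x 2 := congrFun (hvort t x) 2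
    have e0 : (fun s => curl3 (fun y => u (s, y)) x 2) = (fun s => W2 u (s, x)) :=
      funext fun s => hcurl2 s x
    rw [e0, deriv_slice' (hW2.differentiable (by simp)) t x] at h
    have ec : curl3 (fun y => cross (u (t, y)) (curl3 (fun z => u (t, z)) y)) x 2
        = Dv (eS 0) (C1 u) (t, x) - Dv (eS 1) (C0 u) (t, x) := by
      show pd (fun y => cross (u (t, y)) (curl3 (fun z => u (t, z)) y) 1) 0 x
          - pd (fun y => cross (u (t, y)) (curl3 (fun z => u (t, z)) y) 0) 1 x = _
      rw [ecl1, ecl0, pd_slice' (f := C1 u) (hC1.differentiable (by simp)) t x 0,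
        pd_slice' (f := C0 u) (hC0.differentiable (by simp)) t x 1]
    rw [ec, hDC1 (eS 0), hDC0 (eS 1), hDW0 (eS 0), hDW2 (eS 0), hDW2 (eS 1), hDW1 (eS 1), hDW2 eT,
      hW0v, hW1v, hW2v] at h
    exact h
  have hPc0 : ContDiff ℝ (⊤ : ℕ∞) (fun q : ℝ × V3 => u q 0 * Dv (eS 0) ψ q) := hud0.mul hG0
  have hPc1 : ContDiff ℝ (⊤ : ℕ∞) (fun q : ℝ × V3 => u q 1 * Dv (eS 1) ψ q) := hud1.mul hG1
  have hPc2 : ContDiff ℝ (⊤ : ℕ∞) (fun q : ℝ × V3 => u q 2 * Dv (eS 2) ψ q) := hud2.mul hG2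
  have hP01 : ContDiff ℝ (⊤ : ℕ∞) (fun q : ℝ × V3 => u q 0 * Dv (eS 0) ψ q + u q 1 * Dv (eS 1) ψ q) :=
    hPc0.add hPc1
  have hPsum : ContDiff ℝ (⊤ : ℕ∞) (fun q : ℝ × V3 =>
      u q 0 * Dv (eS 0) ψ q + u q 1 * Dv (eS 1) ψ q + u q 2 * Dv (eS 2) ψ q) := hP01.add hPc2
  have hadvF : (fun q : ℝ × V3 => Dv eT ψ q
      + (u q 0 * Dv (eS 0) ψ q + u q 1 * Dv (eS 1) ψ q + u q 2 * Dv (eS 2) ψ q))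
      = (fun _ : ℝ × V3 => (0 : ℝ)) := by
    funext q
    obtain ⟨s, y⟩ := q
    have h := hadv s y
    rw [deriv_slice' hψd s y] at h
    simp only [dot, grad, Fin.sum_univ_three] at h
    rw [pd_slice' (f := ψ) hψd s y 0, pd_slice' (f := ψ) hψd s y 1,
      pd_slice' (f := ψ) hψd s y 2] at h
    show Dv eT ψ (s, y) + (u (s, y) 0 * Dv (eS 0) ψ (s, y) + u (s, y) 1 * Dv (eS 1) ψ (s, y)
      + u (s, y) 2 * Dv (eS 2) ψ (s, y)) = 0
    exact h
  have HA0 := by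
    have h0 : Dv (eS 0) (fun q : ℝ × V3 => Dv eT ψ q
        + (u q 0 * Dv (eS 0) ψ q + u q 1 * Dv (eS 1) ψ q + u q 2 * Dv (eS 2) ψ q)) (t, x) = 0 := by
      rw [hadvF]; exact Dv_const 0 (eS 0) (t, x)
    rw [Dv_add (f := Dv eT ψ) (g := fun q : ℝ × V3 =>
          u q 0 * Dv (eS 0) ψ q + u q 1 * Dv (eS 1) ψ q + u q 2 * Dv (eS 2) ψ q)
        (Dv_diff hψ eT) (hPsum.differentiable (by simp)) (eS 0) (t, x),
      Dv_add (f := fun q : ℝ × V3 => u q 0 * Dv (eS 0) ψ q + u q 1 * Dv (eS 1) ψ q)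
        (g := fun q : ℝ × V3 => u q 2 * Dv (eS 2) ψ q)
        (hP01.differentiable (by simp)) (hPc2.differentiable (by simp)) (eS 0) (t, x),
      Dv_add (f := fun q : ℝ × V3 => u q 0 * Dv (eS 0) ψ q)
        (g := fun q : ℝ × V3 => u q 1 * Dv (eS 1) ψ q)
        (hPc0.differentiable (by simp)) (hPc1.differentiable (by simp)) (eS 0) (t, x),
      Dv_mul (f := fun r => u r 0) (g := Dv (eS 0) ψ) (hud0.differentiable (by simp))
        (hG0.differentiable (by simp)) (eS 0) (t, x),
      Dv_mul (f := fun r => u r 1) (g := Dv (eS 1) ψ) (hud1.differentiable (by simp))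
        (hG1.differentiable (by simp)) (eS 0) (t, x),
      Dv_mul (f := fun r => u r 2) (g := Dv (eS 2) ψ) (hud2.differentiable (by simp))
        (hG2.differentiable (by simp)) (eS 0) (t, x),
      Dv_swap hψ (eS 0) eT (t, x)] at h0
    exact h0
  have HA1 := by
    have h0 : Dv (eS 1) (fun q : ℝ × V3 => Dv eT ψ q
        + (u q 0 * Dv (eS 0) ψ q + u q 1 * Dv (eS 1) ψ q + u q 2 * Dv (eS 2) ψ q)) (t, x) = 0 := by
      rw [hadvF]; exact Dv_const 0 (eS 1) (t, x)
    rw [Dv_add (f := Dv eT ψ) (g := fun q : ℝ × V3 =>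
          u q 0 * Dv (eS 0) ψ q + u q 1 * Dv (eS 1) ψ q + u q 2 * Dv (eS 2) ψ q)
        (Dv_diff hψ eT) (hPsum.differentiable (by simp)) (eS 1) (t, x),
      Dv_add (f := fun q : ℝ × V3 => u q 0 * Dv (eS 0) ψ q + u q 1 * Dv (eS 1) ψ q)
        (g := fun q : ℝ × V3 => u q 2 * Dv (eS 2) ψ q)
        (hP01.differentiable (by simp)) (hPc2.differentiable (by simp)) (eS 1) (t, x),
      Dv_add (f := fun q : ℝ × V3 => u q 0 * Dv (eS 0) ψ q)
        (g := fun q : ℝ × V3 => u q 1 * Dv (eS 1) ψ q)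
        (hPc0.differentiable (by simp)) (hPc1.differentiable (by simp)) (eS 1) (t, x),
      Dv_mul (f := fun r => u r 0) (g := Dv (eS 0) ψ) (hud0.differentiable (by simp))
        (hG0.differentiable (by simp)) (eS 1) (t, x),
      Dv_mul (f := fun r => u r 1) (g := Dv (eS 1) ψ) (hud1.differentiable (by simp))
        (hG1.differentiable (by simp)) (eS 1) (t, x),
      Dv_mul (f := fun r => u r 2) (g := Dv (eS 2) ψ) (hud2.differentiable (by simp))
        (hG2.differentiable (by simp)) (eS 1) (t, x),
      Dv_swap hψ (eS 1) eT (t, x)] at h0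
    exact h0
  have HA2 := by
    have h0 : Dv (eS 2) (fun q : ℝ × V3 => Dv eT ψ q
        + (u q 0 * Dv (eS 0) ψ q + u q 1 * Dv (eS 1) ψ q + u q 2 * Dv (eS 2) ψ q)) (t, x) = 0 := by
      rw [hadvF]; exact Dv_const 0 (eS 2) (t, x)
    rw [Dv_add (f := Dv eT ψ) (g := fun q : ℝ × V3 =>
          u q 0 * Dv (eS 0) ψ q + u q 1 * Dv (eS 1) ψ q + u q 2 * Dv (eS 2) ψ q)
        (Dv_diff hψ eT) (hPsum.differentiable (by simp)) (eS 2) (t, x),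
      Dv_add (f := fun q : ℝ × V3 => u q 0 * Dv (eS 0) ψ q + u q 1 * Dv (eS 1) ψ q)
        (g := fun q : ℝ × V3 => u q 2 * Dv (eS 2) ψ q)
        (hP01.differentiable (by simp)) (hPc2.differentiable (by simp)) (eS 2) (t, x),
      Dv_add (f := fun q : ℝ × V3 => u q 0 * Dv (eS 0) ψ q)
        (g := fun q : ℝ × V3 => u q 1 * Dv (eS 1) ψ q)
        (hPc0.differentiable (by simp)) (hPc1.differentiable (by simp)) (eS 2) (t, x),
      Dv_mul (f := fun r => u r 0) (g := Dv (eS 0) ψ) (hud0.differentiable (by simp))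
        (hG0.differentiable (by simp)) (eS 2) (t, x),
      Dv_mul (f := fun r => u r 1) (g := Dv (eS 1) ψ) (hud1.differentiable (by simp))
        (hG1.differentiable (by simp)) (eS 2) (t, x),
      Dv_mul (f := fun r => u r 2) (g := Dv (eS 2) ψ) (hud2.differentiable (by simp))
        (hG2.differentiable (by simp)) (eS 2) (t, x),
      Dv_swap hψ (eS 2) eT (t, x)] at h0
    exact h0
  have HC := by
    have h := hcont t x
    rw [deriv_slice' hρd t x] at h
    simp only [div3, Fin.sum_univ_three, Pi.smul_apply, smul_eq_mul] at h
    rw [pd_slice' (f := fun q : ℝ × V3 => ρ q * u q 0) ((hρ.mul hud0).differentiable (by simp)) t x 0,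
      pd_slice' (f := fun q : ℝ × V3 => ρ q * u q 1) ((hρ.mul hud1).differentiable (by simp)) t x 1,
      pd_slice' (f := fun q : ℝ × V3 => ρ q * u q 2) ((hρ.mul hud2).differentiable (by simp)) t x 2,
      Dv_mul (f := ρ) (g := fun r => u r 0) hρd (hud0.differentiable (by simp)) (eS 0) (t, x),
      Dv_mul (f := ρ) (g := fun r => u r 1) hρd (hud1.differentiable (by simp)) (eS 1) (t, x),
      Dv_mul (f := ρ) (g := fun r => u r 2) hρd (hud2.differentiable (by simp)) (eS 2) (t, x)] at h
    exact h
  have HB001 : Dv (eS 1) (Dv (eS 0) (fun r => u r 0)) (t, x)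
      = Dv (eS 0) (Dv (eS 1) (fun r => u r 0)) (t, x) := Dv_swap hud0 (eS 1) (eS 0) (t, x)
  have HB002 : Dv (eS 2) (Dv (eS 0) (fun r => u r 0)) (t, x)
      = Dv (eS 0) (Dv (eS 2) (fun r => u r 0)) (t, x) := Dv_swap hud0 (eS 2) (eS 0) (t, x)
  have HB012 : Dv (eS 2) (Dv (eS 1) (fun r => u r 0)) (t, x)
      = Dv (eS 1) (Dv (eS 2) (fun r => u r 0)) (t, x) := Dv_swap hud0 (eS 2) (eS 1) (t, x)
  have HB101 : Dv (eS 1) (Dv (eS 0) (fun r => u r 1)) (t, x)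
      = Dv (eS 0) (Dv (eS 1) (fun r => u r 1)) (t, x) := Dv_swap hud1 (eS 1) (eS 0) (t, x)
  have HB102 : Dv (eS 2) (Dv (eS 0) (fun r => u r 1)) (t, x)
      = Dv (eS 0) (Dv (eS 2) (fun r => u r 1)) (t, x) := Dv_swap hud1 (eS 2) (eS 0) (t, x)
  have HB112 : Dv (eS 2) (Dv (eS 1) (fun r => u r 1)) (t, x)
      = Dv (eS 1) (Dv (eS 2) (fun r => u r 1)) (t, x) := Dv_swap hud1 (eS 2) (eS 1) (t, x)
  have HB201 : Dv (eS 1) (Dv (eS 0) (fun r => u r 2)) (t, x)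
      = Dv (eS 0) (Dv (eS 1) (fun r => u r 2)) (t, x) := Dv_swap hud2 (eS 1) (eS 0) (t, x)
  have HB202 : Dv (eS 2) (Dv (eS 0) (fun r => u r 2)) (t, x)
      = Dv (eS 0) (Dv (eS 2) (fun r => u r 2)) (t, x) := Dv_swap hud2 (eS 2) (eS 0) (t, x)
  have HB212 : Dv (eS 2) (Dv (eS 1) (fun r => u r 2)) (t, x)
      = Dv (eS 1) (Dv (eS 2) (fun r => u r 2)) (t, x) := Dv_swap hud2 (eS 2) (eS 1) (t, x)
  have HG01 : Dv (eS 1) (Dv (eS 0) ψ) (t, x)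
      = Dv (eS 0) (Dv (eS 1) ψ) (t, x) := Dv_swap hψ (eS 1) (eS 0) (t, x)
  have HG02 : Dv (eS 2) (Dv (eS 0) ψ) (t, x)
      = Dv (eS 0) (Dv (eS 2) ψ) (t, x) := Dv_swap hψ (eS 2) (eS 0) (t, x)
  have HG12 : Dv (eS 2) (Dv (eS 1) ψ) (t, x)
      = Dv (eS 1) (Dv (eS 2) ψ) (t, x) := Dv_swap hψ (eS 2) (eS 1) (t, x)
  rw [hDQ eT, hDQ (eS 0), hDQ (eS 1), hDQ (eS 2),
    hDN eT, hDN (eS 0), hDN (eS 1), hDN (eS 2),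
    hDW0 eT, hDW1 eT, hDW2 eT,
    hDW0 (eS 0), hDW1 (eS 0), hDW2 (eS 0),
    hDW0 (eS 1), hDW1 (eS 1), hDW2 (eS 1),
    hDW0 (eS 2), hDW1 (eS 2), hDW2 (eS 2),
    hNv, hW0v, hW1v, hW2v]
  linear_combination ((Dv (eS 0) ψ (t, x) * ρ (t, x)) * HV0
        + (Dv (eS 1) ψ (t, x) * ρ (t, x)) * HV1
        + (Dv (eS 2) ψ (t, x) * ρ (t, x)) * HV2
        + (0 - Dv (eS 2) (fun r => u r 1) (t, x) * ρ (t, x) + Dv (eS 1) (fun r => u r 2) (t, x) * ρ (t, x)) * HA0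
        + (Dv (eS 2) (fun r => u r 0) (t, x) * ρ (t, x) - Dv (eS 0) (fun r => u r 2) (t, x) * ρ (t, x)) * HA1
        + (0 - Dv (eS 1) (fun r => u r 0) (t, x) * ρ (t, x) + Dv (eS 0) (fun r => u r 1) (t, x) * ρ (t, x)) * HA2
        + (-(0 - Dv (eS 1) (fun r => u r 0) (t, x) * Dv (eS 2) ψ (t, x) + Dv (eS 2) (fun r => u r 0) (t, x) * Dv (eS 1) ψ (t, x) + Dv (eS 0) (fun r => u r 1) (t, x) * Dv (eS 2) ψ (t, x) - Dv (eS 2) (fun r => u r 1) (t, x) * Dv (eS 0) ψ (t, x) - Dv (eS 0) (fun r => u r 2) (t, x) * Dv (eS 1) ψ (t, x) + Dv (eS 1) (fun r => u r 2) (t, x) * Dv (eS 0) ψ (t, x))) * HC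
        + (0 - Dv (eS 0) ψ (t, x) * ρ (t, x) * u (t, x) 0 - Dv (eS 1) ψ (t, x) * ρ (t, x) * u (t, x) 1 - Dv (eS 2) ψ (t, x) * ρ (t, x) * u (t, x) 2) * HB012
        + (Dv (eS 0) ψ (t, x) * ρ (t, x) * u (t, x) 0 + Dv (eS 1) ψ (t, x) * ρ (t, x) * u (t, x) 1 + Dv (eS 2) ψ (t, x) * ρ (t, x) * u (t, x) 2) * HB102
        + (0 - Dv (eS 0) ψ (t, x) * ρ (t, x) * u (t, x) 0 - Dv (eS 1) ψ (t, x) * ρ (t, x) * u (t, x) 1 - Dv (eS 2) ψ (t, x) * ρ (t, x) * u (t, x) 2) * HB201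
        + (0 - Dv (eS 2) (fun r => u r 0) (t, x) * ρ (t, x) * u (t, x) 0 - Dv (eS 2) (fun r => u r 1) (t, x) * ρ (t, x) * u (t, x) 1 + Dv (eS 0) (fun r => u r 2) (t, x) * ρ (t, x) * u (t, x) 0 + Dv (eS 1) (fun r => u r 2) (t, x) * ρ (t, x) * u (t, x) 1) * HG01
        + (Dv (eS 1) (fun r => u r 0) (t, x) * ρ (t, x) * u (t, x) 0 - Dv (eS 0) (fun r => u r 1) (t, x) * ρ (t, x) * u (t, x) 0 - Dv (eS 2) (fun r => u r 1) (t, x) * ρ (t, x) * u (t, x) 2 + Dv (eS 1) (fun r => u r 2) (t, x) * ρ (t, x) * u (t, x) 2) * HG02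
        + (Dv (eS 1) (fun r => u r 0) (t, x) * ρ (t, x) * u (t, x) 1 + Dv (eS 2) (fun r => u r 0) (t, x) * ρ (t, x) * u (t, x) 2 - Dv (eS 0) (fun r => u r 1) (t, x) * ρ (t, x) * u (t, x) 1 - Dv (eS 0) (fun r => u r 2) (t, x) * ρ (t, x) * u (t, x) 2) * HG12) / ρ (t, x) ^ 2
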